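/- Let f(x,y) = Ax² + Bxy + Cy² be a primitive integral binary quadratic form that is positive definite (A > 0 and D = B² − 4AC < 0). If D ≠ −3 and D ≠ −4, then Aut(f) = {I₂, −I₂}, i.e. the only matrices K ∈ SL(2,ℤ) with f((x,y)K) = f(x,y) for all x,y are ±I₂. -/

import Mathlib

/-!
Comparing coefficients in `f·K = f`, for `K = [[a, b], [c, d]]` of determinant one, gives the
linear relations `A c = -C b` and `A (d - a) = B b`. By primitivity `A ∣ b`, say `b = A u`, and
then `t = a + d` satisfies `t² - D u² = 4`. A negative discriminant is `≡ 0, 1 (mod 4)`, so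
`D ∉ {-3, -4}` forces `D ≤ -5`, hence `u = 0`; the relations then make `K` scalar, so `K = ±I₂`.
-/

lemma ne_zero_of_disc_neg {A B C : ℤ} (hD : B ^ 2 - 4 * A * C < 0) : A ≠ 0 := by
  rintro rfl
  nlinarith [sq_nonneg B]

lemma disc_le_neg_five {A B C : ℤ} (hD : B ^ 2 - 4 * A * C < 0)
    (h3 : B ^ 2 - 4 * A * C ≠ -3) (h4 : B ^ 2 - 4 * A * C ≠ -4) :
    B ^ 2 - 4 * A * C ≤ -5 := by
  obtain ⟨k, rfl | rfl⟩ := Int.even_or_odd' B <;> ring_nf at * <;> omega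

lemma Int.dvd_of_dvd_mul_of_gcd_eq_one {A B C b : ℤ} (hprim : Int.gcd A (Int.gcd B C) = 1)
    (hB : A ∣ B * b) (hC : A ∣ C * b) : A ∣ b := by
  have hg : A ∣ (Int.gcd B C : ℤ) * b.natAbs := by
    simpa [Int.gcd_mul_right] using Int.dvd_coe_gcd hB hC
  exact Int.dvd_natAbs.mp <|
    (Int.isCoprime_iff_gcd_eq_one.mpr hprim).dvd_of_dvd_mul_left hg

lemma automorph_linear_relations {A B C a b c d : ℤ} (hdet : a * d - b * c = 1)
    (hinv : ∀ x y : ℤ, A * (a * x + c * y) ^ 2 + B * (a * x + c * y) * (b * x + d * y)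
      + C * (b * x + d * y) ^ 2 = A * x ^ 2 + B * x * y + C * y ^ 2) :
    A * c = -(C * b) ∧ A * (d - a) = B * b := by
  have e₁ := hinv 1 0
  have e₂ := hinv 0 1
  have e₃ := hinv 1 1
  constructor
  · have : 2 * (A * c + C * b) = 0 := by
      linear_combination a * e₃ - (a + 2 * c) * e₁ - a * e₂ - (B * a + 2 * C * b) * hdet
    omega
  · have : 2 * (A * (d - a) - B * b) = 0 := by
      linear_combination b * e₃ - (b + 2 * d) * e₁ - b * e₂ + (2 * A * a + B * b) * hdet
    omega

/-- `A (a + d) = 2 A a + B b`, and `(2 A a + B b)² - D b² = 4 A f(a, b) = 4 A²`. -/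
lemma trace_sq_sub_disc_mul_sq {A B C a b d u : ℤ} (hA : A ≠ 0)
    (hval : A * a ^ 2 + B * a * b + C * b ^ 2 = A) (hdiag : A * (d - a) = B * b)
    (hu : b = A * u) : (a + d) ^ 2 - (B ^ 2 - 4 * A * C) * u ^ 2 = 4 := by
  refine mul_left_cancel₀ (pow_ne_zero 2 hA) ?_
  linear_combination (4 * A) * hval + (2 * A * a + B * b + A * (a + d)) * hdiag
    + (B ^ 2 - 4 * A * C) * (b + A * u) * hu

lemma eq_zero_of_sq_sub_mul_sq_eq_four {D t u : ℤ} (hD : D ≤ -5) (h : t ^ 2 - D * u ^ 2 = 4) :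
    u = 0 := by
  by_contra hu
  have : 0 < u ^ 2 := by positivity
  nlinarith [sq_nonneg t]

lemma Matrix.fin_two_eq_one_or_neg_one {K : Matrix (Fin 2) (Fin 2) ℤ} (hdet : K.det = 1)
    (hb : K 0 1 = 0) (hc : K 1 0 = 0) (hd : K 1 1 = K 0 0) : K = 1 ∨ K = -1 := by
  rw [Matrix.det_fin_two, hb, hd, zero_mul, sub_zero] at hdet
  rcases Int.eq_one_or_neg_one_of_mul_eq_one hdet with ha | ha
  · left; ext i j; fin_cases i <;> fin_cases j <;> simp [ha, hb, hc, hd]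
  · right; ext i j; fin_cases i <;> fin_cases j <;> simp [ha, hb, hc, hd]

theorem aut_trivial_of_disc_ne_general (A B C : ℤ)
    (hprim : Int.gcd A (Int.gcd B C) = 1)
    (hD : B ^ 2 - 4 * A * C < 0)
    (h3 : B ^ 2 - 4 * A * C ≠ -3) (h4 : B ^ 2 - 4 * A * C ≠ -4)
    (K : Matrix (Fin 2) (Fin 2) ℤ) (hdet : K.det = 1)
    (hinv : ∀ x y : ℤ,
      A * (K 0 0 * x + K 1 0 * y) ^ 2
        + B * (K 0 0 * x + K 1 0 * y) * (K 0 1 * x + K 1 1 * y)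
        + C * (K 0 1 * x + K 1 1 * y) ^ 2
      = A * x ^ 2 + B * x * y + C * y ^ 2) :
    K = 1 ∨ K = -1 := by
  have hA := ne_zero_of_disc_neg hD
  obtain ⟨hoff, hdiag⟩ := automorph_linear_relations (by rwa [Matrix.det_fin_two] at hdet) hinv
  obtain ⟨u, hu⟩ := Int.dvd_of_dvd_mul_of_gcd_eq_one hprim ⟨_, hdiag.symm⟩
    ⟨-K 1 0, by linear_combination hoff⟩
  have hu0 : u = 0 := eq_zero_of_sq_sub_mul_sq_eq_four (disc_le_neg_five hD h3 h4)
    (trace_sq_sub_disc_mul_sq hA (by simpa using hinv 1 0) hdiag hu)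
  have hb : K 0 1 = 0 := by simpa [hu0] using hu
  have hc : K 1 0 = 0 := by simpa [hb, hA] using hoff
  have hd : K 1 1 = K 0 0 := by simpa [hb, hA, sub_eq_zero] using hdiag
  exact Matrix.fin_two_eq_one_or_neg_one hdet hb hc hd

/-- A primitive positive definite binary quadratic form of discriminant
`D ∉ {−3, −4}` has trivial proper automorphism group `{±I₂}`. -/
theorem aut_trivial_of_disc_ne (A B C : ℤ)
    (hprim : Int.gcd A (Int.gcd B C) = 1) (hA : 0 < A)
    (hD : B ^ 2 - 4 * A * C < 0)
    (h3 : B ^ 2 - 4 * A * C ≠ -3) (h4 : B ^ 2 - 4 * A * C ≠ -4)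
    (K : Matrix (Fin 2) (Fin 2) ℤ) (hdet : K.det = 1)
    (hinv : ∀ x y : ℤ,
      A * (K 0 0 * x + K 1 0 * y) ^ 2
        + B * (K 0 0 * x + K 1 0 * y) * (K 0 1 * x + K 1 1 * y)
        + C * (K 0 1 * x + K 1 1 * y) ^ 2
      = A * x ^ 2 + B * x * y + C * y ^ 2) :
    K = 1 ∨ K = -1 :=
  aut_trivial_of_disc_ne_general A B C hprim hD h3 h4 K hdet hinv
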